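/- The commutator subgroup B_6' of the braid group B_6 is generated by the three elements σ_1σ_2^{−1}, σ_1σ_3^{−1}, and α^2σ_1^{−10}, where α = σ_1σ_2σ_3σ_4σ_5. -/

import Mathlib

/-- Artin braid relators for the braid group on `n` strands, with generators
`FreeGroup.of i` corresponding to `σ_{i+1}` for `i : Fin (n-1)`. -/
def braidRels (n : ℕ) : Set (FreeGroup (Fin (n - 1))) :=
  {r | ∃ i j : Fin (n - 1),
      ((j : ℕ) ≥ (i : ℕ) + 2 ∧
        r = FreeGroup.of i * FreeGroup.of j * (FreeGroup.of i)⁻¹ * (FreeGroup.of j)⁻¹) ∨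
      ((j : ℕ) = (i : ℕ) + 1 ∧
        r = FreeGroup.of i * FreeGroup.of j * FreeGroup.of i *
          (FreeGroup.of j * FreeGroup.of i * FreeGroup.of j)⁻¹)}

/-- The braid group on `n` strands. -/
def BraidGroup (n : ℕ) : Type := PresentedGroup (braidRels n)

instance (n : ℕ) : Group (BraidGroup n) :=
  inferInstanceAs (Group (PresentedGroup (braidRels n)))

/-- The Artin generator `σ_i` of `BraidGroup n`, for `1 ≤ i ≤ n-1` (junk value `1` otherwise). -/
def σ {n : ℕ} (i : ℕ) : BraidGroup n :=
  if h : 1 ≤ i ∧ i < n then PresentedGroup.of (⟨i - 1, by omega⟩ : Fin (n - 1)) else 1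

/-- The element `α = σ_1 σ_2 ⋯ σ_{n-1}`. -/
def α (n : ℕ) : BraidGroup n := ((List.range (n - 1)).map (fun i => σ (i + 1))).prod

/-- The half-twist `σ_j` for an index `j` taken modulo `n`, defined by conjugating
`σ_1` by the rotation `α`: `σ_{1+m} = α^m σ_1 α^{-m}`. -/
def σm {n : ℕ} (j : ℤ) : BraidGroup n := (α n) ^ (j - 1) * σ 1 * (α n) ^ (1 - j)

/-!
For every `n`, the commutator subgroup of `B_n` is generated by the adjacent ratios
`σᵢ σᵢ₊₁⁻¹` and `σᵢ⁻¹ σᵢ₊₁`. These die in the abelianization, where all `σᵢ` coincide. Their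
closure `P` is normal: by the braid relations, conjugating an adjacent ratio by `σₖ` gives a
product of at most two elements `σᵢ σⱼ⁻¹`, `σᵢ⁻¹ σⱼ`, and conjugation by `σₖ⁻¹` is the same
computation for the family `σᵢ⁻¹`, which satisfies the same relations. Modulo `P` all `σᵢ` are
equal, so `B_n ⧸ P` is cyclic and `P` contains the commutator subgroup.

In `B_6`, put `c = α² σ₁⁻¹⁰`. Conjugation by `α²` shifts indices by two, so `c` conjugates
`σ₁ σ₃⁻¹` to `σ₃ σ₅⁻¹` and `σ₁ σ₂⁻¹` to `σ₃⁻⁹ σ₄⁻¹ σ₃¹⁰`. Since `σ₁` commutes with `σ₃` and `σ₄`,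
conjugating the latter by `(σ₁ σ₃⁻¹)⁻⁹ = σ₃⁹ σ₁⁻⁹` leaves `σ₄⁻¹ σ₃`, and then by
`(σ₁ σ₃⁻¹)⁻¹` gives `σ₃ σ₄⁻¹`. This yields every `σᵢ σᵢ₊₁⁻¹`, and then every `σᵢ⁻¹ σᵢ₊₁ = (σₖ σᵢ⁻¹) (σₖ σᵢ₊₁⁻¹)⁻¹` for some `σₖ` commuting with
`σᵢ` and `σᵢ₊₁`. Conversely, `α` maps to `σ⁵` in the abelianization, so `c` maps to `1`.
-/

open Subgroup

section Group

variable {G : Type*} [Group G]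

theorem conj_eq_of_braid {x y : G} (h : x * y * x = y * x * y) :
    x * y * x⁻¹ = y⁻¹ * x * y :=
  calc x * y * x⁻¹ = y⁻¹ * (y * x * y) * x⁻¹ := by group
    _ = y⁻¹ * (x * y * x) * x⁻¹ := by rw [h]
    _ = y⁻¹ * x * y := by group

theorem conj_inv_eq_of_braid {x y : G} (h : x * y * x = y * x * y) :
    x * y⁻¹ * x⁻¹ = y⁻¹ * x⁻¹ * y := by
  simpa [mul_assoc] using congrArg (·⁻¹) (conj_eq_of_braid h)

theorem Commute.inv_mul_eq_mul_inv_mul_mul_inv_inv {x y z : G} (hy : Commute x y)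
    (hz : Commute x z) : y⁻¹ * z = (x * y⁻¹) * (x * z⁻¹)⁻¹ := by
  rw [← (hy.inv_right.mul_right hz).mul_inv_cancel]
  group

theorem SemiconjBy.mem_of_mem {K : Subgroup G} {a x y : G} (h : SemiconjBy a x y) (ha : a ∈ K)
    (hx : x ∈ K) : y ∈ K := by
  rw [← mul_inv_eq_of_eq_mul h.eq]
  exact mul_mem (mul_mem ha hx) (inv_mem ha)

theorem Subgroup.closure_normal_of_conj_mem {S T : Set G} (hT : closure T = ⊤)
    (h : ∀ t ∈ T, ∀ s ∈ S, t * s * t⁻¹ ∈ closure S ∧ t⁻¹ * s * t ∈ closure S) :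
    (closure S).Normal := by
  have conj_mem (g : G) (hg : ∀ s ∈ S, g * s * g⁻¹ ∈ closure S) {x : G}
      (hx : x ∈ closure S) : g * x * g⁻¹ ∈ closure S :=
    (closure_le (K := (closure S).comap (MulAut.conj g).toMonoidHom)).2 hg hx
  rw [← normalizer_eq_top_iff, eq_top_iff, ← hT, closure_le]
  refine fun t ht x => ⟨conj_mem t fun s hs => (h t ht s hs).1, fun hx => ?_⟩
  simpa [mul_assoc] using conj_mem t⁻¹ (by simpa using fun s hs => (h t ht s hs).2) hx

theorem commutator_le_of_mul_inv_mem {T : Set G} (hT : closure T = ⊤) {N : Subgroup G}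
    [N.Normal] (t₀ : G) (hN : ∀ t ∈ T, t * t₀⁻¹ ∈ N) : commutator G ≤ N := by
  rw [← Normal.quotient_commutative_iff_commutator_le]
  suffices zpowers (t₀ : G ⧸ N) = ⊤ from
    have : IsCyclic (G ⧸ N) := isCyclic_iff_exists_zpowers_eq_top.2 ⟨_, this⟩
    inferInstance
  rw [eq_top_iff, ← MonoidHom.range_eq_top.2 (QuotientGroup.mk'_surjective N),
    MonoidHom.range_eq_map, ← hT, MonoidHom.map_closure, closure_le]
  rintro _ ⟨t, ht, rfl⟩
  have h_eq : (t : G ⧸ N) = t₀ :=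
    QuotientGroup.eq_iff_div_mem.2 (by simpa [div_eq_mul_inv] using hN t ht)
  rw [QuotientGroup.mk'_apply, h_eq]
  exact mem_zpowers _

end Group

section BraidFamily

variable {G : Type*} [Group G] {n : ℕ} {x : ℕ → G}

structure IsBraidFamily (n : ℕ) (x : ℕ → G) : Prop where
  braid : ∀ i, 1 ≤ i → i + 2 ≤ n → x i * x (i + 1) * x i = x (i + 1) * x i * x (i + 1)
  comm : ∀ i j, 1 ≤ i → i + 2 ≤ j → j < n → Commute (x i) (x j)

theorem IsBraidFamily.inv (hx : IsBraidFamily n x) : IsBraidFamily n fun i => (x i)⁻¹ where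
  braid i hi hin := by simpa [mul_assoc] using congrArg (·⁻¹) (hx.braid i hi hin)
  comm i j hi hij hjn := (hx.comm i j hi hij hjn).inv_inv

def adjacentRatios (n : ℕ) (x : ℕ → G) : Set G :=
  {g | ∃ i, 1 ≤ i ∧ i + 2 ≤ n ∧ (g = x i * (x (i + 1))⁻¹ ∨ g = (x i)⁻¹ * x (i + 1))}

theorem adjacentRatios_inv : adjacentRatios n (fun i => (x i)⁻¹) = adjacentRatios n x := by
  ext g
  simp only [adjacentRatios, inv_inv, Set.mem_ofPred_eq, or_comm]

theorem mul_inv_mem_of_forall_adjacent {K : Subgroup G}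
    (hK : ∀ i, 1 ≤ i → i + 2 ≤ n → x i * (x (i + 1))⁻¹ ∈ K) {i j : ℕ}
    (hi : 1 ≤ i) (hin : i < n) (hj : 1 ≤ j) (hjn : j < n) : x i * (x j)⁻¹ ∈ K := by
  have mem_one : ∀ i, 1 ≤ i → i < n → x i * (x 1)⁻¹ ∈ K := by
    intro i hi
    induction i, hi using Nat.le_induction with
    | base => simp
    | succ i hi ih =>
      intro hin
      rw [show x (i + 1) * (x 1)⁻¹ = (x i * (x (i + 1))⁻¹)⁻¹ * (x i * (x 1)⁻¹) by group]
      exact mul_mem (inv_mem (hK i hi hin)) (ih (by omega))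
  simpa using mul_mem (mem_one i hi hin) (inv_mem (mem_one j hj hjn))

theorem mul_inv_mem_closure_adjacentRatios {i j : ℕ} (hi : 1 ≤ i) (hin : i < n) (hj : 1 ≤ j)
    (hjn : j < n) : x i * (x j)⁻¹ ∈ closure (adjacentRatios n x) :=
  mul_inv_mem_of_forall_adjacent
    (fun i hi hin => subset_closure (⟨i, hi, hin, .inl rfl⟩ : _ ∈ adjacentRatios n x))
    hi hin hj hjn

theorem inv_mul_mem_closure_adjacentRatios {i j : ℕ} (hi : 1 ≤ i) (hin : i < n) (hj : 1 ≤ j)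
    (hjn : j < n) : (x i)⁻¹ * x j ∈ closure (adjacentRatios n x) := by
  simpa [adjacentRatios_inv] using
    mul_inv_mem_closure_adjacentRatios (x := fun i => (x i)⁻¹) hi hin hj hjn

namespace IsBraidFamily

theorem conj_mul_inv_succ_mem (hx : IsBraidFamily n x) {i k : ℕ} (hk : 1 ≤ k) (hkn : k < n)
    (hi : 1 ≤ i) (hin : i + 2 ≤ n) :
    x k * (x i * (x (i + 1))⁻¹) * (x k)⁻¹ ∈ closure (adjacentRatios n x) := by
  have p (a b : ℕ) (h : 1 ≤ a ∧ a < n ∧ 1 ≤ b ∧ b < n) :=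
    mul_inv_mem_closure_adjacentRatios (x := x) h.1 h.2.1 h.2.2.1 h.2.2.2
  have q (a b : ℕ) (h : 1 ≤ a ∧ a < n ∧ 1 ≤ b ∧ b < n) :=
    inv_mul_mem_closure_adjacentRatios (x := x) h.1 h.2.1 h.2.2.1 h.2.2.2
  have mem {g a b : G} (e : g = a * b) (ha : a ∈ closure (adjacentRatios n x))
      (hb : b ∈ closure (adjacentRatios n x)) : g ∈ closure (adjacentRatios n x) :=
    e ▸ mul_mem ha hb
  have split : x k * (x i * (x (i + 1))⁻¹) * (x k)⁻¹ =
      (x k * x i * (x k)⁻¹) * (x k * (x (i + 1))⁻¹ * (x k)⁻¹) := by group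
  obtain h | rfl | rfl | rfl | rfl | h :
      k + 2 ≤ i ∨ k + 1 = i ∨ k = i ∨ k = i + 1 ∨ k = i + 2 ∨ i + 3 ≤ k := by omega
  · rw [((hx.comm k i hk h (by omega)).mul_right
      (hx.comm k (i + 1) hk (by omega) (by omega)).inv_right).mul_inv_cancel]
    exact p _ _ (by omega)
  · refine mem ?_ (q (k + 1) k (by omega)) (p (k + 1) (k + 1 + 1) (by omega))
    rw [split, conj_eq_of_braid (hx.braid k hk (by omega)),
      (hx.comm k (k + 1 + 1) hk (by omega) (by omega)).inv_right.mul_inv_cancel]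
    group
  · refine mem ?_ (p k (k + 1) (by omega)) (q k (k + 1) (by omega))
    rw [split, conj_inv_eq_of_braid (hx.braid k hk hin)]
    group
  · refine mem ?_ (q i (i + 1) (by omega)) (p i (i + 1) (by omega))
    rw [split, conj_eq_of_braid (hx.braid i hi hin).symm]
    group
  · have hb : x (i + 2) * x (i + 1) * x (i + 2) = x (i + 1) * x (i + 2) * x (i + 1) :=
      (hx.braid (i + 1) (by omega) (by omega)).symm
    refine mem ?_ (p i (i + 1) (by omega)) (q (i + 2) (i + 1) (by omega))
    rw [split, (hx.comm i (i + 2) hi le_rfl (by omega)).symm.mul_inv_cancel,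
      conj_inv_eq_of_braid hb]
    group
  · rw [(((hx.comm i k hi (by omega) hkn).mul_left
      (hx.comm (i + 1) k (by omega) (by omega) hkn).inv_left).symm).mul_inv_cancel]
    exact p _ _ (by omega)

theorem conj_mem_closure (hx : IsBraidFamily n x) {k : ℕ} (hk : 1 ≤ k) (hkn : k < n) {g : G}
    (hg : g ∈ adjacentRatios n x) : x k * g * (x k)⁻¹ ∈ closure (adjacentRatios n x) := by
  obtain ⟨i, hi, hin, rfl | rfl⟩ := hg
  · exact hx.conj_mul_inv_succ_mem hk hkn hi hin
  · rw [show x k * ((x i)⁻¹ * x (i + 1)) * (x k)⁻¹ =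
        (x k * (x i)⁻¹) * (x k * (x (i + 1))⁻¹)⁻¹ by group]
    exact mul_mem (mul_inv_mem_closure_adjacentRatios hk hkn hi (by omega))
      (inv_mem (mul_inv_mem_closure_adjacentRatios hk hkn (by omega) (by omega)))

theorem inv_conj_mem_closure (hx : IsBraidFamily n x) {k : ℕ} (hk : 1 ≤ k) (hkn : k < n)
    {g : G} (hg : g ∈ adjacentRatios n x) :
    (x k)⁻¹ * g * x k ∈ closure (adjacentRatios n x) := by
  rw [← adjacentRatios_inv] at hg ⊢
  simpa using hx.inv.conj_mem_closure hk hkn hg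

end IsBraidFamily

end BraidFamily

namespace BraidGroup

variable {n : ℕ}

theorem σ_eq_of {i : ℕ} (hi : 1 ≤ i) (hin : i < n) :
    (σ i : BraidGroup n) = PresentedGroup.of (⟨i - 1, by omega⟩ : Fin (n - 1)) :=
  dif_pos ⟨hi, hin⟩

theorem σ_succ_eq_of (j : Fin (n - 1)) : (σ (j + 1) : BraidGroup n) = PresentedGroup.of j := by
  rw [σ_eq_of (by omega) (by omega)]
  rfl

theorem σ_eq_one {i : ℕ} (hi : ¬(1 ≤ i ∧ i < n)) : (σ i : BraidGroup n) = 1 :=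
  dif_neg hi

theorem commute_σ {i j : ℕ} (hij : i + 2 ≤ j) : Commute (σ i : BraidGroup n) (σ j) := by
  by_cases hi : 1 ≤ i ∧ i < n
  swap
  · rw [σ_eq_one hi]
    exact Commute.one_left _
  by_cases hjn : j < n
  swap
  · rw [σ_eq_one (n := n) (i := j) (by omega)]
    exact Commute.one_right _
  have hr := PresentedGroup.one_of_mem (rels := braidRels n)
    ⟨⟨i - 1, by omega⟩, ⟨j - 1, by omega⟩, .inl ⟨by simp only; omega, rfl⟩⟩
  simp only [map_mul, map_inv] at hr
  rw [σ_eq_of hi.1 hi.2, σ_eq_of (by omega) hjn]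
  exact commutatorElement_eq_one_iff_commute.mp hr

theorem σ_braid {i : ℕ} (hi : 1 ≤ i) (hin : i + 2 ≤ n) :
    (σ i : BraidGroup n) * σ (i + 1) * σ i = σ (i + 1) * σ i * σ (i + 1) := by
  have hr := PresentedGroup.mk_eq_mk_of_mul_inv_mem (rels := braidRels n)
    ⟨⟨i - 1, by omega⟩, ⟨i + 1 - 1, by omega⟩, .inr ⟨by simp only; omega, rfl⟩⟩
  simp only [map_mul] at hr
  rw [σ_eq_of hi (by omega), σ_eq_of (by omega) (by omega)]
  exact hr

theorem isBraidFamily_σ : IsBraidFamily n (σ : ℕ → BraidGroup n) :=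
  ⟨fun _ hi hin => σ_braid hi hin, fun _ _ _ hij _ => commute_σ hij⟩

theorem closure_range_σ :
    closure (Set.range fun j : Fin (n - 1) => (σ (j + 1) : BraidGroup n)) = ⊤ := by
  simp_rw [σ_succ_eq_of]
  exact PresentedGroup.closure_range_of _

instance closure_adjacentRatios_normal :
    (closure (adjacentRatios n (σ : ℕ → BraidGroup n))).Normal := by
  refine closure_normal_of_conj_mem closure_range_σ ?_
  rintro _ ⟨j, rfl⟩ g hg
  have := j.2
  exact ⟨isBraidFamily_σ.conj_mem_closure (by omega) (by omega) hg,
    isBraidFamily_σ.inv_conj_mem_closure (by omega) (by omega) hg⟩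

theorem abelianization_of_σ {i : ℕ} (hi : 1 ≤ i) (hin : i < n) :
    Abelianization.of (σ i : BraidGroup n) = Abelianization.of (σ 1) := by
  induction i, hi using Nat.le_induction with
  | base => rfl
  | succ i hi ih =>
    have h := congrArg Abelianization.of (σ_braid hi hin)
    simp only [map_mul, mul_comm (Abelianization.of (σ (i + 1)))] at h
    rw [← ih (by omega)]
    exact (mul_left_cancel h).symm

theorem abelianization_of_α : Abelianization.of (α n) = Abelianization.of (σ 1) ^ (n - 1) := by
  rw [α, map_list_prod, List.map_map,
    List.map_congr_left (g := fun _ => Abelianization.of (σ 1)) fun i hi => ?_]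
  · simp
  · simp only [List.mem_range] at hi
    exact abelianization_of_σ (by omega) (by omega)

theorem commutator_eq_closure_adjacentRatios :
    commutator (BraidGroup n) = closure (adjacentRatios n σ) := by
  refine le_antisymm (commutator_le_of_mul_inv_mem closure_range_σ (σ 1) ?_) ?_
  · rintro _ ⟨j, rfl⟩
    have := j.2
    exact mul_inv_mem_closure_adjacentRatios (by omega) (by omega) le_rfl (by omega)
  · rw [closure_le]
    rintro _ ⟨i, hi, hin, rfl | rfl⟩ <;>
      rw [SetLike.mem_coe, ← Abelianization.ker_of, MonoidHom.mem_ker] <;>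
      simp [abelianization_of_σ hi (by omega : i < n),
        abelianization_of_σ (by omega : 1 ≤ i + 1) (by omega : i + 1 < n)]

theorem commute_prod_σ {m j : ℕ} (hj : m + 2 ≤ j) :
    Commute ((List.range m).map fun l => (σ (l + 1) : BraidGroup n)).prod (σ j) :=
  Commute.list_prod_left _ _ fun y hy => by
    obtain ⟨l, hl, rfl⟩ := List.mem_map.1 hy
    exact commute_σ (by simp only [List.mem_range] at hl; omega)

theorem prod_σ_mul_σ {m i : ℕ} (hi : 1 ≤ i) (him : i + 1 ≤ m) (hmn : m < n) :
    ((List.range m).map fun l => (σ (l + 1) : BraidGroup n)).prod * σ i =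
      σ (i + 1) * ((List.range m).map fun l => σ (l + 1)).prod := by
  induction m, him using Nat.le_induction with
  | base =>
    obtain ⟨i, rfl⟩ : ∃ i', i = i' + 1 := ⟨i - 1, by omega⟩
    have hc := commute_prod_σ (n := n) (m := i) (j := i + 1 + 1) le_rfl
    simp only [List.range_succ, List.map_append, List.prod_append, List.map_cons, List.map_nil,
      List.prod_cons, List.prod_nil, mul_one] at hc ⊢
    rw [mul_assoc _ (σ (i + 1)), mul_assoc, σ_braid hi hmn, ← mul_assoc, ← mul_assoc, hc.eq]
    group
  | succ m hm ih =>
    simp only [List.range_succ, List.map_append, List.prod_append, List.map_cons, List.map_nil,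
      List.prod_cons, List.prod_nil, mul_one] at ih ⊢
    rw [mul_assoc, (commute_σ (by omega)).symm.eq, ← mul_assoc, ih (by omega), mul_assoc]

theorem α_mul_σ {i : ℕ} (hi : 1 ≤ i) (hin : i + 2 ≤ n) : α n * σ i = σ (i + 1) * α n :=
  prod_σ_mul_σ hi (by omega) (by omega)

theorem semiconjBy_α_sq_σ {i : ℕ} (hi : 1 ≤ i) (hin : i + 3 ≤ n) :
    SemiconjBy (α n ^ 2) (σ i) (σ (i + 2)) := by
  unfold SemiconjBy
  rw [sq, mul_assoc, α_mul_σ hi (by omega), ← mul_assoc, α_mul_σ (by omega) hin, mul_assoc]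

def commutatorGenerators : Set (BraidGroup 6) :=
  {σ 1 * (σ 2)⁻¹, σ 1 * (σ 3)⁻¹, α 6 ^ 2 * (σ 1 ^ 10)⁻¹}

theorem mem_closure_commutatorGenerators :
    σ 1 * (σ 2)⁻¹ ∈ closure commutatorGenerators ∧ σ 1 * (σ 3)⁻¹ ∈ closure commutatorGenerators ∧
      α 6 ^ 2 * (σ 1 ^ 10)⁻¹ ∈ closure commutatorGenerators := by
  refine ⟨?_, ?_, ?_⟩ <;> exact subset_closure (by simp [commutatorGenerators])

theorem closure_commutatorGenerators_le_commutator :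
    closure commutatorGenerators ≤ commutator (BraidGroup 6) := by
  have h2 := abelianization_of_σ (n := 6) (i := 2) (by norm_num) (by norm_num)
  have h3 := abelianization_of_σ (n := 6) (i := 3) (by norm_num) (by norm_num)
  rw [closure_le]
  rintro g (rfl | rfl | rfl) <;>
    rw [SetLike.mem_coe, ← Abelianization.ker_of, MonoidHom.mem_ker] <;>
    simp [h2, h3, abelianization_of_α, ← pow_mul]

theorem σ_three_mul_inv_σ_four_mem : σ 3 * (σ 4)⁻¹ ∈ closure commutatorGenerators := by
  obtain ⟨ha, hb, hc⟩ := mem_closure_commutatorGenerators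
  have c13 : Commute (σ 1 : BraidGroup 6) (σ 3) := commute_σ le_rfl
  have c14 : Commute (σ 1 : BraidGroup 6) (σ 4) := commute_σ (by norm_num)
  have h13 : SemiconjBy (α 6 ^ 2) (σ 1) (σ 3) := semiconjBy_α_sq_σ le_rfl (by norm_num)
  have h24 : SemiconjBy (α 6 ^ 2) (σ 2) (σ 4) := semiconjBy_α_sq_σ (by norm_num) (by norm_num)
  have hca : SemiconjBy (α 6 ^ 2 * (σ 1 ^ 10)⁻¹) (σ 1 * (σ 2)⁻¹)
      (σ 3 ^ (-9 : ℤ) * (σ 4)⁻¹ * σ 3 ^ 10) :=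
    (((h13.zpow_right (-9)).mul_right h24.inv_right).mul_right (h13.pow_right 10)).mul_left
      (by simp only [SemiconjBy]; group)
  have hb9 : (((σ 1 : BraidGroup 6) * (σ 3)⁻¹) ^ 9)⁻¹ = σ 3 ^ 9 * (σ 1 ^ 9)⁻¹ := by
    rw [c13.inv_right.mul_pow, mul_inv_rev, inv_pow, inv_inv]
  have hq : SemiconjBy ((((σ 1 : BraidGroup 6) * (σ 3)⁻¹) ^ 9)⁻¹)
      (σ 3 ^ (-9 : ℤ) * (σ 4)⁻¹ * σ 3 ^ 10) ((σ 4)⁻¹ * σ 3) := by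
    rw [hb9]
    refine SemiconjBy.mul_left ?_ ((((c13.zpow_right (-9)).mul_right c14.inv_right).mul_right
      (c13.pow_right 10)).pow_left 9).inv_left
    simp only [SemiconjBy]
    group
  have hp : SemiconjBy ((σ 3 : BraidGroup 6) * (σ 1)⁻¹) ((σ 4)⁻¹ * σ 3) (σ 3 * (σ 4)⁻¹) := by
    refine SemiconjBy.mul_left ?_ (c14.inv_right.mul_right c13).inv_left
    simp only [SemiconjBy]
    group
  refine hp.mem_of_mem ?_ (hq.mem_of_mem ?_ (hca.mem_of_mem hc ha))
  · simpa using inv_mem hb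
  · exact inv_mem (pow_mem hb 9)

theorem closure_adjacentRatios_le_closure_commutatorGenerators :
    closure (adjacentRatios 6 σ) ≤ closure commutatorGenerators := by
  obtain ⟨ha, hb, hc⟩ := mem_closure_commutatorGenerators
  have hcomm (i j : ℕ) (h : i + 2 ≤ j ∨ j + 2 ≤ i) : Commute (σ i : BraidGroup 6) (σ j) :=
    h.elim commute_σ fun h => (commute_σ h).symm
  have h13 : SemiconjBy (α 6 ^ 2) (σ 1) (σ 3) := semiconjBy_α_sq_σ le_rfl (by norm_num)
  have h35 : SemiconjBy (α 6 ^ 2) (σ 3) (σ 5) := semiconjBy_α_sq_σ (by norm_num) le_rfl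
  have hcb : SemiconjBy (α 6 ^ 2 * (σ 1 ^ 10)⁻¹) (σ 1 * (σ 3)⁻¹) (σ 3 * (σ 5)⁻¹) :=
    (h13.mul_right h35.inv_right).mul_left
      (((Commute.refl _).mul_right (hcomm 1 3 (by norm_num)).inv_right).pow_left 10).inv_left
  have adj (i : ℕ) (hi : 1 ≤ i) (hin : i + 2 ≤ 6) :
      σ i * (σ (i + 1))⁻¹ ∈ closure commutatorGenerators := by
    obtain rfl | rfl | rfl | rfl : i = 1 ∨ i = 2 ∨ i = 3 ∨ i = 4 := by omega
    · exact ha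
    · simpa [mul_assoc] using mul_mem (inv_mem ha) hb
    · exact σ_three_mul_inv_σ_four_mem
    · simpa [mul_assoc] using
        mul_mem (inv_mem σ_three_mul_inv_σ_four_mem) (hcb.mem_of_mem hc hb)
  rw [closure_le]
  rintro _ ⟨i, hi, hin, rfl | rfl⟩
  · exact adj i hi hin
  · obtain ⟨k, hk, hkn, hki⟩ : ∃ k, 1 ≤ k ∧ k < 6 ∧ (k + 2 ≤ i ∨ i + 3 ≤ k) :=
      ⟨if i ≤ 2 then 5 else 1, by split_ifs <;> omega⟩
    rw [(hcomm k i (by omega)).inv_mul_eq_mul_inv_mul_mul_inv_inv (hcomm k (i + 1) (by omega))]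
    exact mul_mem (mul_inv_mem_of_forall_adjacent adj hk hkn hi (by omega))
      (inv_mem (mul_inv_mem_of_forall_adjacent adj hk hkn (by omega) (by omega)))

end BraidGroup

theorem B6_commutator_three_generators :
    Subgroup.closure ({σ 1 * (σ 2)⁻¹, σ 1 * (σ 3)⁻¹,
        (α 6) ^ 2 * ((σ 1 : BraidGroup 6) ^ 10)⁻¹} : Set (BraidGroup 6)) =
      commutator (BraidGroup 6) :=
  le_antisymm BraidGroup.closure_commutatorGenerators_le_commutator
    (BraidGroup.commutator_eq_closure_adjacentRatios.trans_le
      BraidGroup.closure_adjacentRatios_le_closure_commutatorGenerators)
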